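/- Let (P₁, S₁) and (P₂, S₂) be i.i.d. pairs where S_i = P_i + ε_i, with P_i ~ N(0, σ_P²), ε_i ~ N(0, σ_ε²) independent, and let σ_S² = σ_P² + σ_ε², ρ = σ_P/σ_S. Then E[S_î] where î = argmax_i P_i equals ρ·σ_S/√π, and hence the selection regret E[max(S₁,S₂)] − E[S_î] equals (1−ρ)σ_S/√π. -/

import Mathlib

open MeasureTheory ProbabilityTheory Real Set
open scoped ENNReal NNReal

lemma gReal_map_neg (v : ℝ≥0) :
    (gaussianReal 0 v).map (fun x => -x) = gaussianReal 0 v := by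
  have h1 : ((⟨(-1:ℝ)^2, sq_nonneg _⟩ : ℝ≥0)) = 1 := by ext; norm_num
  have h := gaussianReal_map_const_mul (μ := 0) (v := v) (-1)
  simp only [h1, mul_zero, one_mul, neg_one_mul] at h
  convert h using 2; ext; simp

lemma integral_gaussianReal_eq {v : ℝ≥0} (hv : v ≠ 0) (g : ℝ → ℝ) :
    ∫ x, g x ∂(gaussianReal 0 v) = ∫ x, gaussianPDFReal 0 v x * g x := by
  rw [gaussianReal_of_var_ne_zero _ hv, gaussianPDF_def]
  have : (fun x => ENNReal.ofReal (gaussianPDFReal 0 v x))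
      = fun x => ((Real.toNNReal (gaussianPDFReal 0 v x) : ℝ≥0) : ℝ≥0∞) := rfl
  rw [this, integral_withDensity_eq_integral_smul
    ((measurable_gaussianPDFReal 0 v).real_toNNReal) g]
  congr 1; funext x
  rw [NNReal.smul_def, smul_eq_mul, Real.coe_toNNReal _ (gaussianPDFReal_nonneg 0 v x)]

lemma integrable_gaussianReal_iff {v : ℝ≥0} (hv : v ≠ 0) (g : ℝ → ℝ) :
    Integrable g (gaussianReal 0 v) ↔ Integrable (fun x => g x * gaussianPDFReal 0 v x) := by
  rw [gaussianReal_of_var_ne_zero _ hv, gaussianPDF_def]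
  rw [integrable_withDensity_iff (measurable_gaussianPDFReal 0 v).ennreal_ofReal
    (ae_of_all _ fun x => ENNReal.ofReal_lt_top)]
  simp_rw [ENNReal.toReal_ofReal (gaussianPDFReal_nonneg 0 v _)]

lemma gaussianPDFReal_eq (v : ℝ≥0) (x : ℝ) :
    gaussianPDFReal 0 v x = (√(2 * π * v))⁻¹ * rexp (-(2 * (v:ℝ))⁻¹ * x ^ 2) := by
  rw [gaussianPDFReal]
  congr 1
  rw [sub_zero]
  congr 1
  by_cases hv : (v:ℝ) = 0
  · simp [hv]
  · field_simp

lemma integral_Ioi_mul_exp_neg_mul_sq {b : ℝ} (hb : 0 < b) :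
    ∫ r in Ioi (0:ℝ), r * rexp (-b * r ^ 2) = (2 * b)⁻¹ := by
  have h := integral_mul_cexp_neg_mul_sq (b := (b : ℂ)) (by simpa using hb)
  have he : ∀ r : ℝ, (r : ℂ) * Complex.exp (-(b:ℂ) * (r:ℂ) ^ 2)
      = ((r * rexp (-b * r ^ 2) : ℝ) : ℂ) := by
    intro r
    push_cast [Complex.ofReal_exp]
    ring_nf
  simp_rw [he] at h
  rw [show (fun r : ℝ => ((r * rexp (-b * r ^ 2) : ℝ) : ℂ)) = (fun r : ℝ => ((r * rexp (-b * r ^ 2) : ℝ) : ℂ)) from rfl] at h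
  have h3 := (integral_ofReal (𝕜 := ℂ) (f := fun r : ℝ => r * rexp (-b * r ^ 2))
    (μ := volume.restrict (Ioi 0)))
  rw [show (RCLike.ofReal : ℝ → ℂ) = Complex.ofReal from rfl] at h3
  rw [h3] at h
  have : (((∫ r in Ioi (0:ℝ), r * rexp (-b * r ^ 2)) : ℝ) : ℂ) = (((2*b)⁻¹ : ℝ) : ℂ) := by
    rw [h]; push_cast; ring
  exact_mod_cast this

lemma integral_abs_mul_exp {b : ℝ} (hb : 0 < b) :
    ∫ x : ℝ, |x| * rexp (-b * x ^ 2) = b⁻¹ := by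
  have : ∀ x : ℝ, |x| * rexp (-b * x ^ 2) = |x| * rexp (-b * |x| ^ 2) := by
    intro x; rw [sq_abs]
  rw [funext this, integral_comp_abs (f := fun x => x * rexp (-b * x ^ 2)),
    integral_Ioi_mul_exp_neg_mul_sq hb]
  field_simp

lemma vpos {v : ℝ≥0} (hv : v ≠ 0) : (0:ℝ) < (v:ℝ) := by
  exact_mod_cast pos_iff_ne_zero.mpr hv

lemma integrable_id_gaussianReal (v : ℝ≥0) :
    Integrable (fun x : ℝ => x) (gaussianReal 0 v) := by
  by_cases hv : v = 0
  · subst hv; rw [gaussianReal_zero_var]; constructor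
    · exact aestronglyMeasurable_id
    · simp [HasFiniteIntegral, lintegral_dirac]
  · rw [integrable_gaussianReal_iff hv]
    have hb : (0:ℝ) < (2 * (v:ℝ))⁻¹ := by positivity
    have := (integrable_mul_exp_neg_mul_sq hb).const_mul (√(2 * π * v))⁻¹
    refine this.congr ?_
    filter_upwards with x
    rw [gaussianPDFReal_eq]
    ring

lemma integrable_abs_gaussianReal (v : ℝ≥0) :
    Integrable (fun x : ℝ => |x|) (gaussianReal 0 v) :=
  (integrable_id_gaussianReal v).abs

lemma integral_id_gaussianReal (v : ℝ≥0) :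
    ∫ x, x ∂(gaussianReal 0 v) = 0 := by
  have h1 : ∫ x, x ∂(gaussianReal 0 v) = ∫ x, -x ∂(gaussianReal 0 v) := by
    conv_lhs => rw [← gReal_map_neg v]
    rw [integral_map (φ := fun x : ℝ => -x) (by fun_prop) (f := fun x : ℝ => x) (by exact aestronglyMeasurable_id)]
  rw [integral_neg] at h1
  linarith

lemma integral_abs_gaussianReal (v : ℝ≥0) :
    ∫ x, |x| ∂(gaussianReal 0 v) = Real.sqrt (2 * v / π) := by
  by_cases hv : v = 0
  · subst hv; rw [gaussianReal_zero_var]; simp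
  · have hvR := vpos hv
    have hb : (0:ℝ) < (2 * (v:ℝ))⁻¹ := by positivity
    rw [integral_gaussianReal_eq hv]
    have : ∀ x : ℝ, gaussianPDFReal 0 v x * |x|
        = (√(2 * π * v))⁻¹ * (|x| * rexp (-(2 * (v:ℝ))⁻¹ * x ^ 2)) := by
      intro x; rw [gaussianPDFReal_eq]; ring
    rw [funext this, MeasureTheory.integral_const_mul, integral_abs_mul_exp hb]
    have h2 : ((2 * (v:ℝ))⁻¹)⁻¹ = 2 * v := by field_simp
    rw [h2]
    have hs : √(2 * π * v) * √(2 * (v:ℝ) / π) = 2 * v := by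
      rw [← Real.sqrt_mul (by positivity)]
      rw [show (2 * π * (v:ℝ)) * (2 * v / π) = (2*v)^2 by field_simp]
      exact Real.sqrt_sq (by positivity)
    have hne : √(2 * π * (v:ℝ)) ≠ 0 := by positivity
    calc (√(2 * π * (v:ℝ)))⁻¹ * (2 * v)
        = (√(2 * π * (v:ℝ)))⁻¹ * (√(2 * π * v) * √(2 * (v:ℝ) / π)) := by rw [hs]
      _ = √(2 * (v:ℝ) / π) := by field_simp

lemma pdf_conv {a b : ℝ≥0} (ha : a ≠ 0) (hb : b ≠ 0) (y : ℝ) :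
    ∫ x, gaussianPDFReal 0 a x * gaussianPDFReal x b y = gaussianPDFReal 0 (a+b) y := by
  have haR := vpos ha; have hbR := vpos hb
  set A := (a:ℝ); set B := (b:ℝ)
  have habR : (0:ℝ) < A + B := by linarith
  set C := (A + B) / (2 * A * B) with hC
  have hCpos : 0 < C := by positivity
  set m := A * y / (A + B) with hm
  have key : ∀ x : ℝ, gaussianPDFReal 0 a x * gaussianPDFReal x b y
      = (√(2 * π * A))⁻¹ * (√(2 * π * B))⁻¹ * rexp (-y^2 / (2*(A+B)))
        * rexp (-C * (x - m)^2) := by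
    intro x
    have e : rexp (-x^2/(2*A)) * rexp (-(y-x)^2/(2*B))
        = rexp (-y^2 / (2*(A+B))) * rexp (-C * (x - m)^2) := by
      rw [← Real.exp_add, ← Real.exp_add]
      congr 1
      rw [hC, hm]
      field_simp
      ring
    simp only [gaussianPDFReal, sub_zero]
    rw [mul_mul_mul_comm, e]
    ring
  rw [funext key, MeasureTheory.integral_const_mul,
    integral_sub_right_eq_self (fun x => rexp (-C * x ^ 2)) m, integral_gaussian]
  simp only [gaussianPDFReal, sub_zero]
  have hcoe : ((a + b : ℝ≥0) : ℝ) = A + B := by push_cast; ring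
  rw [hcoe]
  have hconst : (√(2 * π * A))⁻¹ * (√(2 * π * B))⁻¹ * √(π / C) = (√(2 * π * (A+B)))⁻¹ := by
    have h1 : √(2 * π * A) * √(2 * π * B) * (√(2 * π * (A+B)))⁻¹ = √(π / C) := by
      rw [← Real.sqrt_inv, ← Real.sqrt_mul (by positivity), ← Real.sqrt_mul (by positivity)]
      congr 1
      rw [hC]
      field_simp
    rw [← h1]
    have n1 : √(2 * π * A) ≠ 0 := by positivity
    have n2 : √(2 * π * B) ≠ 0 := by positivity
    have n3 : √(2 * π * (A+B)) ≠ 0 := by positivity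
    field_simp
  calc (√(2 * π * A))⁻¹ * (√(2 * π * B))⁻¹ * rexp (-y ^ 2 / (2 * (A + B))) * √(π / C)
      = ((√(2 * π * A))⁻¹ * (√(2 * π * B))⁻¹ * √(π / C)) * rexp (-y ^ 2 / (2 * (A + B))) := by
        ring
    _ = (√(2 * π * (A+B)))⁻¹ * rexp (-y ^ 2 / (2 * (A + B))) := by rw [hconst]

lemma measurable_pdf_pair (b : ℝ≥0) :
    Measurable (fun p : ℝ × ℝ => gaussianPDFReal p.1 b p.2) := by
  unfold gaussianPDFReal
  fun_prop

lemma gaussianReal_map_add (a b : ℝ≥0) :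
    ((gaussianReal 0 a).prod (gaussianReal 0 b)).map (fun p : ℝ × ℝ => p.1 + p.2)
      = gaussianReal 0 (a + b) := by
  by_cases hb : b = 0
  · subst hb
    rw [gaussianReal_zero_var, Measure.prod_dirac,
      Measure.map_map (by fun_prop) (by fun_prop)]
    have : ((fun p : ℝ × ℝ => p.1 + p.2) ∘ fun x : ℝ => (x, (0:ℝ))) = fun x : ℝ => x + 0 := rfl
    rw [this]
    simpa using gaussianReal_map_add_const (μ := 0) (v := a) 0
  by_cases ha : a = 0
  · subst ha
    rw [gaussianReal_zero_var, Measure.dirac_prod,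
      Measure.map_map (by fun_prop) (by fun_prop)]
    have : ((fun p : ℝ × ℝ => p.1 + p.2) ∘ Prod.mk (0:ℝ)) = fun x : ℝ => 0 + x := rfl
    rw [this]
    simpa using gaussianReal_map_const_add (μ := 0) (v := b) 0
  have hab : a + b ≠ 0 := by simp [ha]
  ext s hs
  rw [Measure.map_apply (by fun_prop) hs,
    Measure.prod_apply (hs.preimage (by fun_prop))]
  have hkey : ∀ x : ℝ, (gaussianReal 0 b) (Prod.mk x ⁻¹' ((fun p : ℝ × ℝ => p.1 + p.2) ⁻¹' s))
      = ∫⁻ y in s, ENNReal.ofReal (gaussianPDFReal x b y) := by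
    intro x
    have h1 : Prod.mk x ⁻¹' ((fun p : ℝ × ℝ => p.1 + p.2) ⁻¹' s) = (fun y => x + y) ⁻¹' s := rfl
    rw [h1]
    have h2 : (gaussianReal 0 b) ((fun y => x + y) ⁻¹' s)
        = ((gaussianReal 0 b).map (fun y => x + y)) s := by
      rw [Measure.map_apply (by fun_prop) hs]
    rw [h2]
    have h3 : (gaussianReal 0 b).map (fun y => x + y) = gaussianReal x b := by
      have := gaussianReal_map_const_add (μ := 0) (v := b) x
      simpa using this
    rw [h3, gaussianReal_apply _ hb s]
    rfl
  simp_rw [hkey]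
  -- swap the integrals
  have hmeas : Measurable (fun p : ℝ × ℝ => Set.indicator s
      (fun y => ENNReal.ofReal (gaussianPDFReal p.1 b y)) p.2) := by
    apply Measurable.indicator
    · exact ((measurable_pdf_pair b).comp (measurable_fst.prodMk measurable_snd)).ennreal_ofReal
    · exact measurable_snd hs
  have hswap : (∫⁻ x, (∫⁻ y in s, ENNReal.ofReal (gaussianPDFReal x b y))
        ∂(gaussianReal 0 a))
      = ∫⁻ y in s, (∫⁻ x, ENNReal.ofReal (gaussianPDFReal x b y) ∂(gaussianReal 0 a)) := by
    calc (∫⁻ x, (∫⁻ y in s, ENNReal.ofReal (gaussianPDFReal x b y)) ∂(gaussianReal 0 a))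
        = ∫⁻ x, (∫⁻ y, Set.indicator s (fun y => ENNReal.ofReal (gaussianPDFReal x b y)) y)
            ∂(gaussianReal 0 a) := by
          refine lintegral_congr fun x => ?_
          rw [lintegral_indicator hs]
      _ = ∫⁻ y, (∫⁻ x, Set.indicator s (fun y => ENNReal.ofReal (gaussianPDFReal x b y)) y
            ∂(gaussianReal 0 a)) := by
          rw [lintegral_lintegral_swap hmeas.aemeasurable]
      _ = ∫⁻ y, Set.indicator s
            (fun y => ∫⁻ x, ENNReal.ofReal (gaussianPDFReal x b y) ∂(gaussianReal 0 a)) y := by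
          refine lintegral_congr fun y => ?_
          by_cases hy : y ∈ s <;> simp [hy]
      _ = ∫⁻ y in s, (∫⁻ x, ENNReal.ofReal (gaussianPDFReal x b y) ∂(gaussianReal 0 a)) := by
          rw [lintegral_indicator hs]
  rw [hswap]
  have hinner : ∀ y : ℝ, (∫⁻ x, ENNReal.ofReal (gaussianPDFReal x b y) ∂(gaussianReal 0 a))
      = ENNReal.ofReal (gaussianPDFReal 0 (a+b) y) := by
    intro y
    have hint : Integrable (fun x => gaussianPDFReal x b y) (gaussianReal 0 a) := by
      refine Integrable.mono' (integrable_const ((√(2 * π * (b:ℝ)))⁻¹)) ?_ ?_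
      · exact ((measurable_pdf_pair b).comp
          (measurable_id.prodMk measurable_const)).aestronglyMeasurable
      · filter_upwards with x
        rw [Real.norm_eq_abs, abs_of_nonneg (gaussianPDFReal_nonneg _ _ _)]
        unfold gaussianPDFReal
        have h1 : rexp (-(y - x)^2 / (2 * (b:ℝ))) ≤ 1 := by
          apply Real.exp_le_one_iff.mpr
          have hbR : (0:ℝ) < (b:ℝ) := by exact_mod_cast pos_iff_ne_zero.mpr hb
          apply div_nonpos_of_nonpos_of_nonneg <;> [skip; positivity]
          simp [sq_nonneg]
        calc (√(2 * π * (b:ℝ)))⁻¹ * rexp (-(y - x)^2 / (2 * (b:ℝ)))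
            ≤ (√(2 * π * (b:ℝ)))⁻¹ * 1 := by
              apply mul_le_mul_of_nonneg_left h1
              positivity
          _ = (√(2 * π * (b:ℝ)))⁻¹ := mul_one _
    rw [← ofReal_integral_eq_lintegral_ofReal hint
      (ae_of_all _ fun x => gaussianPDFReal_nonneg _ _ _)]
    congr 1
    rw [integral_gaussianReal_eq ha, pdf_conv ha hb y]
  simp_rw [hinner]
  rw [gaussianReal_apply _ hab s]
  rfl

section marginal
variable {α β : Type*} [MeasurableSpace α] [MeasurableSpace β]
  (μ : Measure α) (ν : Measure β) (f : α → ℝ) (g : β → ℝ)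

lemma integral_fst_prod [SFinite ν] [IsProbabilityMeasure ν] [SFinite μ]
    (hf : AEStronglyMeasurable f μ) :
    ∫ p, f p.1 ∂(μ.prod ν) = ∫ x, f x ∂μ := by
  have hmap : (μ.prod ν).map Prod.fst = μ := Measure.fst_prod
  have hf' : AEStronglyMeasurable f ((μ.prod ν).map Prod.fst) := by rwa [hmap]
  rw [← integral_map measurable_fst.aemeasurable hf', hmap]

lemma integral_snd_prod [SFinite ν] [IsProbabilityMeasure μ] [SFinite μ]
    (hg : AEStronglyMeasurable g ν) :
    ∫ p, g p.2 ∂(μ.prod ν) = ∫ y, g y ∂ν := by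
  have hmap : (μ.prod ν).map Prod.snd = ν := Measure.snd_prod
  have hg' : AEStronglyMeasurable g ((μ.prod ν).map Prod.snd) := by rwa [hmap]
  rw [← integral_map measurable_snd.aemeasurable hg', hmap]

lemma integrable_fst_prod [SFinite ν] [IsProbabilityMeasure ν] [SFinite μ]
    (hf : Integrable f μ) :
    Integrable (fun p => f p.1) (μ.prod ν) := by
  have hmap : (μ.prod ν).map Prod.fst = μ := Measure.fst_prod
  have hf' : Integrable f ((μ.prod ν).map Prod.fst) := by rwa [hmap]
  exact (integrable_map_measure hf'.aestronglyMeasurable measurable_fst.aemeasurable).mp hf'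

lemma integrable_snd_prod [SFinite ν] [IsProbabilityMeasure μ] [SFinite μ]
    (hg : Integrable g ν) :
    Integrable (fun p => g p.2) (μ.prod ν) := by
  have hmap : (μ.prod ν).map Prod.snd = ν := Measure.snd_prod
  have hg' : Integrable g ((μ.prod ν).map Prod.snd) := by rwa [hmap]
  exact (integrable_map_measure hg'.aestronglyMeasurable measurable_snd.aemeasurable).mp hg'

end marginal

lemma max_eq_half (x y : ℝ) : max x y = (x + y + |x - y|) / 2 := by
  rcases le_total x y with h | h
  · rw [max_eq_right h, abs_of_nonpos (by linarith)]; ring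
  · rw [max_eq_left h, abs_of_nonneg (by linarith)]; ring

lemma integrable_max_prod_gaussian (v w : ℝ≥0) :
    Integrable (fun p : ℝ × ℝ => max p.1 p.2) ((gaussianReal 0 v).prod (gaussianReal 0 w)) := by
  have h1 : Integrable (fun p : ℝ × ℝ => p.1) ((gaussianReal 0 v).prod (gaussianReal 0 w)) :=
    integrable_fst_prod _ _ _ (integrable_id_gaussianReal v)
  have h2 : Integrable (fun p : ℝ × ℝ => p.2) ((gaussianReal 0 v).prod (gaussianReal 0 w)) :=
    integrable_snd_prod _ _ _ (integrable_id_gaussianReal w)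
  have hint : Integrable (fun p : ℝ × ℝ => (p.1 + p.2 + |p.1 - p.2|) / 2)
      ((gaussianReal 0 v).prod (gaussianReal 0 w)) :=
    ((h1.add h2).add (h1.sub h2).abs).div_const 2
  refine hint.congr ?_
  filter_upwards with p
  rw [max_eq_half]

lemma integral_max_prod_gaussian (v : ℝ≥0) :
    ∫ p : ℝ × ℝ, max p.1 p.2 ∂((gaussianReal 0 v).prod (gaussianReal 0 v))
      = Real.sqrt ((v:ℝ) / π) := by
  set μ := gaussianReal 0 v
  set M := μ.prod μ with hM
  have h1 : Integrable (fun p : ℝ × ℝ => p.1) M :=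
    integrable_fst_prod _ _ _ (integrable_id_gaussianReal v)
  have h2 : Integrable (fun p : ℝ × ℝ => p.2) M :=
    integrable_snd_prod _ _ _ (integrable_id_gaussianReal v)
  have habs : ∫ p : ℝ × ℝ, |p.1 - p.2| ∂M = 2 * Real.sqrt ((v:ℝ) / π) := by
    -- step 1: |p.1 - p.2| ↦ |p.1 + p.2| via (id, neg)
    have hmp : MeasurePreserving (Prod.map (id : ℝ → ℝ) (fun x : ℝ => -x)) M M := by
      refine MeasurePreserving.prod (MeasurePreserving.id μ) ?_
      exact ⟨measurable_neg, gReal_map_neg v⟩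
    have hemb : MeasurableEmbedding (Prod.map (id : ℝ → ℝ) (fun x : ℝ => -x)) := by
      let e : (ℝ × ℝ) ≃ᵐ (ℝ × ℝ) :=
        (MeasurableEquiv.refl ℝ).prodCongr (MeasurableEquiv.neg ℝ)
      have he : ⇑e = Prod.map (id : ℝ → ℝ) (fun x : ℝ => -x) := rfl
      rw [← he]
      exact e.measurableEmbedding
    have hstep1 := MeasurePreserving.integral_comp hmp hemb (fun p : ℝ × ℝ => |p.1 + p.2|)
    have hstep1' : ∫ p : ℝ × ℝ, |p.1 - p.2| ∂M = ∫ p : ℝ × ℝ, |p.1 + p.2| ∂M := by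
      rw [← hstep1]
      refine integral_congr_ae (ae_of_all _ fun p => ?_)
      simp [Prod.map, sub_eq_add_neg]
    rw [hstep1']
    have hstep2 : ∫ p : ℝ × ℝ, |p.1 + p.2| ∂M = ∫ z, |z| ∂(gaussianReal 0 (v + v)) := by
      rw [← gaussianReal_map_add v v, integral_map (by fun_prop) ?h]
      case h => exact (continuous_abs.aestronglyMeasurable (μ := _))
    rw [hstep2, integral_abs_gaussianReal]
    rw [show (2 * ((v+v : ℝ≥0):ℝ) / π) = 4 * ((v:ℝ)/π) by push_cast; ring]
    rw [show (4 : ℝ) * ((v:ℝ)/π) = 2^2 * ((v:ℝ)/π) by norm_num]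
    rw [Real.sqrt_mul (by positivity), Real.sqrt_sq (by norm_num)]
  have hmax : ∀ p : ℝ × ℝ, max p.1 p.2 = (p.1 + p.2 + |p.1 - p.2|) / 2 :=
    fun p => max_eq_half _ _
  calc ∫ p : ℝ × ℝ, max p.1 p.2 ∂M
      = ∫ p : ℝ × ℝ, (p.1 + p.2 + |p.1 - p.2|) / 2 ∂M := by
        exact integral_congr_ae (ae_of_all _ fun p => hmax p)
    _ = ((∫ p : ℝ × ℝ, p.1 ∂M) + (∫ p : ℝ × ℝ, p.2 ∂M)
          + ∫ p : ℝ × ℝ, |p.1 - p.2| ∂M) / 2 := by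
        have hsum : Integrable (fun p : ℝ × ℝ => p.1 + p.2) M := h1.add h2
        have habsint : Integrable (fun p : ℝ × ℝ => |p.1 - p.2|) M := (h1.sub h2).abs
        rw [integral_div, integral_add hsum habsint, integral_add h1 h2]
    _ = Real.sqrt ((v:ℝ) / π) := by
        rw [integral_fst_prod _ _ _ (integrable_id_gaussianReal v).aestronglyMeasurable,
          integral_snd_prod _ _ _ (integrable_id_gaussianReal v).aestronglyMeasurable,
          _root_.integral_id_gaussianReal, habs]
        ring

noncomputable def interEquiv : ((ℝ × ℝ) × (ℝ × ℝ)) ≃ᵐ ((ℝ × ℝ) × (ℝ × ℝ)) where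
  toFun := fun x => ((x.1.1, x.2.1), (x.1.2, x.2.2))
  invFun := fun x => ((x.1.1, x.2.1), (x.1.2, x.2.2))
  left_inv := fun x => rfl
  right_inv := fun x => rfl
  measurable_toFun := by
    show Measurable (fun x : (ℝ × ℝ) × (ℝ × ℝ) => ((x.1.1, x.2.1), (x.1.2, x.2.2)))
    fun_prop
  measurable_invFun := by
    show Measurable (fun x : (ℝ × ℝ) × (ℝ × ℝ) => ((x.1.1, x.2.1), (x.1.2, x.2.2)))
    fun_prop

lemma interEquiv_mp (μ μ' ν ν' : Measure ℝ) [SFinite μ] [SFinite μ'] [SFinite ν] [SFinite ν'] :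
    MeasurePreserving (fun x : (ℝ × ℝ) × (ℝ × ℝ) => ((x.1.1, x.2.1), (x.1.2, x.2.2)))
      ((μ.prod μ').prod (ν.prod ν')) ((μ.prod ν).prod (μ'.prod ν')) := by
  have f1 := measurePreserving_prodAssoc μ μ' (ν.prod ν')
  have g1 := (measurePreserving_prodAssoc μ' ν ν').symm MeasurableEquiv.prodAssoc
  have g2 := (Measure.measurePreserving_swap (μ := μ') (ν := ν)).prod (MeasurePreserving.id ν')
  have g3 := measurePreserving_prodAssoc ν μ' ν'
  have g := (g3.comp g2).comp g1
  have f2 := (MeasurePreserving.id μ).prod g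
  have f3 := (measurePreserving_prodAssoc μ ν (μ'.prod ν')).symm MeasurableEquiv.prodAssoc
  have total := (f3.comp f2).comp f1
  have heq : (⇑(MeasurableEquiv.prodAssoc
        (α := ℝ) (β := ℝ) (γ := ℝ × ℝ)).symm ∘
      (Prod.map (id : ℝ → ℝ)
        (⇑(MeasurableEquiv.prodAssoc (α := ℝ) (β := ℝ) (γ := ℝ)) ∘
          (Prod.map (Prod.swap : ℝ × ℝ → ℝ × ℝ) (id : ℝ → ℝ) ∘
            ⇑(MeasurableEquiv.prodAssoc (α := ℝ) (β := ℝ) (γ := ℝ)).symm))) ∘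
      ⇑(MeasurableEquiv.prodAssoc (α := ℝ) (β := ℝ) (γ := ℝ × ℝ)))
      = (fun x : (ℝ × ℝ) × (ℝ × ℝ) => ((x.1.1, x.2.1), (x.1.2, x.2.2))) := rfl
  rw [← heq]
  exact total

/-- The joint law of `((P₁, P₂), (ε₁, ε₂))`: all four coordinates independent,
`P_i ~ N(0, σ_P²)`, `ε_i ~ N(0, σ_ε²)`. -/
noncomputable def noisySelectionMeasure (σP σε : ℝ) : Measure ((ℝ × ℝ) × (ℝ × ℝ)) :=
  ((gaussianReal 0 (Real.toNNReal (σP ^ 2))).prod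
      (gaussianReal 0 (Real.toNNReal (σP ^ 2)))).prod
    ((gaussianReal 0 (Real.toNNReal (σε ^ 2))).prod
      (gaussianReal 0 (Real.toNNReal (σε ^ 2))))

/-- with `S_i = P_i + ε_i`, proxy-based selection (pick the index
maximizing `P_i`) achieves `E[S_î] = ρ·σ_S/√π`, so the selection regret versus
the oracle `E[max(S₁, S₂)]` is `(1 − ρ)σ_S/√π`. -/
theorem noisy_selection_regret (σP σε : ℝ) (hP : 0 < σP) (hε : 0 ≤ σε)
    (σS ρ : ℝ) (hσS : σS = Real.sqrt (σP ^ 2 + σε ^ 2)) (hρ : ρ = σP / σS) :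
    (∫ x : (ℝ × ℝ) × (ℝ × ℝ),
        (if x.1.2 < x.1.1 then x.1.1 + x.2.1 else x.1.2 + x.2.2)
      ∂(noisySelectionMeasure σP σε)) = ρ * σS / Real.sqrt π
    ∧ (∫ x : (ℝ × ℝ) × (ℝ × ℝ), max (x.1.1 + x.2.1) (x.1.2 + x.2.2)
          ∂(noisySelectionMeasure σP σε))
        - (∫ x : (ℝ × ℝ) × (ℝ × ℝ),
            (if x.1.2 < x.1.1 then x.1.1 + x.2.1 else x.1.2 + x.2.2)
          ∂(noisySelectionMeasure σP σε))
        = (1 - ρ) * σS / Real.sqrt π := by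
  set vP : ℝ≥0 := Real.toNNReal (σP ^ 2) with hvPdef
  set vε : ℝ≥0 := Real.toNNReal (σε ^ 2) with hvεdef
  set μ : Measure ℝ := gaussianReal 0 vP with hμdef
  set ν : Measure ℝ := gaussianReal 0 vε with hνdef
  have hM : noisySelectionMeasure σP σε = (μ.prod μ).prod (ν.prod ν) := rfl
  have hvP : ((vP : ℝ≥0) : ℝ) = σP ^ 2 := Real.coe_toNNReal _ (sq_nonneg σP)
  have hvε : ((vε : ℝ≥0) : ℝ) = σε ^ 2 := Real.coe_toNNReal _ (sq_nonneg σε)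
  have hσS0 : 0 < σS := by
    rw [hσS]; apply Real.sqrt_pos.mpr; positivity
  have hρσS : ρ * σS = σP := by
    rw [hρ]; field_simp
  -- Part 1 : the selected integral
  have hA : Integrable (fun x : (ℝ × ℝ) × (ℝ × ℝ) => max x.1.1 x.1.2)
      ((μ.prod μ).prod (ν.prod ν)) :=
    integrable_fst_prod _ _ _ (integrable_max_prod_gaussian vP vP)
  have hBmeas : Measurable (fun x : (ℝ × ℝ) × (ℝ × ℝ) =>
      if x.1.2 < x.1.1 then x.2.1 else x.2.2) := by
    exact Measurable.ite (measurableSet_lt (by fun_prop) (by fun_prop)) (by fun_prop) (by fun_prop)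
  have hCint : Integrable (fun x : (ℝ × ℝ) × (ℝ × ℝ) => |x.2.1| + |x.2.2|)
      ((μ.prod μ).prod (ν.prod ν)) := by
    have h1 : Integrable (fun e : ℝ × ℝ => |e.1| + |e.2|) (ν.prod ν) := by
      exact (integrable_fst_prod _ _ (fun y : ℝ => |y|)
          (integrable_id_gaussianReal vε).abs).add
        (integrable_snd_prod _ _ (fun y : ℝ => |y|) (integrable_id_gaussianReal vε).abs)
    exact integrable_snd_prod _ _ (fun e : ℝ × ℝ => |e.1| + |e.2|) h1
  have hB : Integrable (fun x : (ℝ × ℝ) × (ℝ × ℝ) =>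
      if x.1.2 < x.1.1 then x.2.1 else x.2.2) ((μ.prod μ).prod (ν.prod ν)) := by
    refine hCint.mono' hBmeas.aestronglyMeasurable ?_
    filter_upwards with x
    rw [Real.norm_eq_abs]
    by_cases h : x.1.2 < x.1.1 <;> simp only [h, if_true, if_false] <;>
      [linarith [abs_nonneg x.2.2]; linarith [abs_nonneg x.2.1]]
  have hB0 : (∫ x : (ℝ × ℝ) × (ℝ × ℝ),
      (if x.1.2 < x.1.1 then x.2.1 else x.2.2) ∂((μ.prod μ).prod (ν.prod ν))) = 0 := by
    rw [integral_prod _ hB]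
    have hinner : ∀ p : ℝ × ℝ,
        (∫ e : ℝ × ℝ, (if p.2 < p.1 then e.1 else e.2) ∂(ν.prod ν)) = 0 := by
      intro p
      by_cases h : p.2 < p.1
      · simp only [h, if_true]
        rw [integral_fst_prod _ _ (fun y : ℝ => y) aestronglyMeasurable_id,
          _root_.integral_id_gaussianReal]
      · simp only [h, if_false]
        rw [integral_snd_prod _ _ (fun y : ℝ => y) aestronglyMeasurable_id,
          _root_.integral_id_gaussianReal]
    simp only [hinner, integral_zero]
  have hsplit : (∫ x : (ℝ × ℝ) × (ℝ × ℝ),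
      (if x.1.2 < x.1.1 then x.1.1 + x.2.1 else x.1.2 + x.2.2)
        ∂((μ.prod μ).prod (ν.prod ν)))
      = (∫ x : (ℝ × ℝ) × (ℝ × ℝ), max x.1.1 x.1.2 ∂((μ.prod μ).prod (ν.prod ν)))
        + ∫ x : (ℝ × ℝ) × (ℝ × ℝ),
          (if x.1.2 < x.1.1 then x.2.1 else x.2.2) ∂((μ.prod μ).prod (ν.prod ν)) := by
    rw [← integral_add hA hB]
    refine integral_congr_ae (ae_of_all _ fun x => ?_)
    by_cases h : x.1.2 < x.1.1
    · simp only [h, if_true, max_eq_left h.le]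
    · simp only [h, if_false, max_eq_right (not_lt.mp h)]
  have hmaxP : (∫ x : (ℝ × ℝ) × (ℝ × ℝ), max x.1.1 x.1.2 ∂((μ.prod μ).prod (ν.prod ν)))
      = Real.sqrt (σP ^ 2 / π) := by
    rw [integral_fst_prod _ _ (fun p : ℝ × ℝ => max p.1 p.2)
      (integrable_max_prod_gaussian vP vP).aestronglyMeasurable,
      integral_max_prod_gaussian vP, hvP]
  have part1 : (∫ x : (ℝ × ℝ) × (ℝ × ℝ),
      (if x.1.2 < x.1.1 then x.1.1 + x.2.1 else x.1.2 + x.2.2)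
        ∂(noisySelectionMeasure σP σε)) = Real.sqrt (σP ^ 2 / π) := by
    rw [hM, hsplit, hB0, hmaxP, add_zero]
  -- Part 2 : the oracle integral
  have hmp := interEquiv_mp μ μ ν ν
  have hemb : MeasurableEmbedding
      (fun x : (ℝ × ℝ) × (ℝ × ℝ) => ((x.1.1, x.2.1), (x.1.2, x.2.2))) := by
    have he : ⇑interEquiv = fun x : (ℝ × ℝ) × (ℝ × ℝ) => ((x.1.1, x.2.1), (x.1.2, x.2.2)) := rfl
    rw [← he]
    exact interEquiv.measurableEmbedding
  have hstep := MeasurePreserving.integral_comp hmp hemb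
    (fun y : (ℝ × ℝ) × (ℝ × ℝ) => max (y.1.1 + y.1.2) (y.2.1 + y.2.2))
  have hstep' : (∫ x : (ℝ × ℝ) × (ℝ × ℝ), max (x.1.1 + x.2.1) (x.1.2 + x.2.2)
      ∂((μ.prod μ).prod (ν.prod ν)))
      = ∫ y : (ℝ × ℝ) × (ℝ × ℝ), max (y.1.1 + y.1.2) (y.2.1 + y.2.2)
          ∂((μ.prod ν).prod (μ.prod ν)) := hstep
  have horacle : (∫ x : (ℝ × ℝ) × (ℝ × ℝ), max (x.1.1 + x.2.1) (x.1.2 + x.2.2)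
      ∂(noisySelectionMeasure σP σε)) = Real.sqrt ((σP ^ 2 + σε ^ 2) / π) := by
    rw [hM, hstep']
    have hmapped : (∫ y : (ℝ × ℝ) × (ℝ × ℝ), max (y.1.1 + y.1.2) (y.2.1 + y.2.2)
        ∂((μ.prod ν).prod (μ.prod ν)))
        = ∫ p : ℝ × ℝ, max p.1 p.2
            ∂((gaussianReal 0 (vP + vε)).prod (gaussianReal 0 (vP + vε))) := by
      rw [← gaussianReal_map_add vP vε,
        Measure.map_prod_map _ _ (by fun_prop : Measurable fun p : ℝ × ℝ => p.1 + p.2)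
          (by fun_prop : Measurable fun p : ℝ × ℝ => p.1 + p.2),
        integral_map (by fun_prop)
          ((continuous_fst.max continuous_snd).aestronglyMeasurable)]
      rfl
    rw [hmapped, integral_max_prod_gaussian (vP + vε)]
    congr 1
    push_cast [hvP, hvε]
    ring
  -- arithmetic
  have hsqrt1 : Real.sqrt (σP ^ 2 / π) = ρ * σS / Real.sqrt π := by
    rw [hρσS, Real.sqrt_div (sq_nonneg σP), Real.sqrt_sq hP.le]
  have hsqrt2 : Real.sqrt ((σP ^ 2 + σε ^ 2) / π) = σS / Real.sqrt π := by
    rw [Real.sqrt_div (by positivity), ← hσS]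
  constructor
  · rw [part1, hsqrt1]
  · rw [part1, horacle, hsqrt1, hsqrt2, hρσS]
    have hπ : Real.sqrt π ≠ 0 := by positivity
    field_simp
    nlinarith [hρσS]
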